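/- arXiv:2012.07376 — 6 statements merged into one kernel-verified Lean document; each statement's English description precedes it below -/
import Mathlib

section
/- Let B > 0, w > 0, φ₀ ∈ ℝ, and let r ≥ π/w. Define γ₁(t) = ∫_{t−r}^{t} |B·w·cos(w·τ + φ₀)| dτ. Then for every t ∈ ℝ, γ₁(t) ≥ 2B. -/
open intervalIntegral Real

lemma abs_cos_periodic : Function.Periodic (fun x => |Real.cos x|) Real.pi := by
  intro x
  simp [Real.cos_add_pi]

lemma integral_abs_cos_zero : (∫ x in (0:ℝ)..Real.pi, |Real.cos x|) = 2 := by
  have hsplit : (∫ x in (0:ℝ)..Real.pi, |Real.cos x|) =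
      (∫ x in (0:ℝ)..(Real.pi/2), |Real.cos x|) +
      ∫ x in (Real.pi/2)..Real.pi, |Real.cos x| := by
    rw [intervalIntegral.integral_add_adjacent_intervals] <;>
      exact (Real.continuous_cos.abs).intervalIntegrable _ _
  have h1 : (∫ x in (0:ℝ)..(Real.pi/2), |Real.cos x|) = 1 := by
    rw [intervalIntegral.integral_congr (g := Real.cos)]
    · simp [integral_cos]
    · intro x hx
      rw [Set.uIcc_of_le (by positivity)] at hx
      exact abs_of_nonneg (Real.cos_nonneg_of_mem_Icc ⟨by linarith [hx.1, Real.pi_pos], hx.2⟩)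
  have h2 : (∫ x in (Real.pi/2)..Real.pi, |Real.cos x|) = 1 := by
    rw [intervalIntegral.integral_congr (g := fun x => -Real.cos x)]
    · simp [integral_cos]
    · intro x hx
      rw [Set.uIcc_of_le (by linarith [Real.pi_pos])] at hx
      exact abs_of_nonpos (Real.cos_nonpos_of_pi_div_two_le_of_le hx.1
        (by linarith [hx.2, Real.pi_pos]))
  rw [hsplit, h1, h2]; norm_num

lemma integral_abs_cos (a : ℝ) : (∫ x in a..(a + Real.pi), |Real.cos x|) = 2 := by
  rw [abs_cos_periodic.intervalIntegral_add_eq a 0, zero_add, integral_abs_cos_zero]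

theorem moving_window_integral_abs_deriv_ge_of_large_window
    (B w φ₀ r : ℝ) (hB : 0 < B) (hw : 0 < w) (hr : r ≥ Real.pi / w)
    (γ₁ : ℝ → ℝ)
    (hγ₁ : ∀ t, γ₁ t = ∫ τ in (t - r)..t, |B * w * Real.cos (w * τ + φ₀)|) :
    ∀ t : ℝ, γ₁ t ≥ 2 * B := by
  intro t
  have hpi := Real.pi_pos
  have hpw : 0 < Real.pi / w := by positivity
  have hcont : ∀ a b : ℝ, IntervalIntegrable
      (fun τ => |B * w * Real.cos (w * τ + φ₀)|) MeasureTheory.volume a b := by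
    intro a b
    exact ((continuous_const.mul (Real.continuous_cos.comp (by continuity))).abs).intervalIntegrable _ _
  have hmono : (∫ τ in (t - Real.pi / w)..t, |B * w * Real.cos (w * τ + φ₀)|)
      ≤ ∫ τ in (t - r)..t, |B * w * Real.cos (w * τ + φ₀)| := by
    apply intervalIntegral.integral_mono_interval (by linarith) (by linarith) (le_refl t)
    · filter_upwards with x using abs_nonneg _
    · exact hcont _ _
  have hval : (∫ τ in (t - Real.pi / w)..t, |B * w * Real.cos (w * τ + φ₀)|) = 2 * B := by
    have : (∫ τ in (t - Real.pi / w)..t, |B * w * Real.cos (w * τ + φ₀)|)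
        = B * w * ∫ τ in (t - Real.pi / w)..t, |Real.cos (w * τ + φ₀)| := by
      rw [← intervalIntegral.integral_const_mul]
      congr 1; funext τ
      rw [abs_mul, abs_of_pos (by positivity : (0:ℝ) < B * w)]
    rw [this, intervalIntegral.integral_comp_mul_add (fun u => |Real.cos u|) hw.ne' φ₀]
    have harg : w * (t - Real.pi / w) + φ₀ + Real.pi = w * t + φ₀ := by
      field_simp; ring
    rw [show w * t + φ₀ = w * (t - Real.pi / w) + φ₀ + Real.pi from harg.symm,
      integral_abs_cos]
    rw [smul_eq_mul]
    field_simp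
  rw [hγ₁ t]
  calc 2 * B = ∫ τ in (t - Real.pi / w)..t, |B * w * Real.cos (w * τ + φ₀)| := hval.symm
    _ ≤ _ := hmono
end

section
/- Let B > 0, w > 0, φ₀ ∈ ℝ, and let r satisfy 0 < r < π/w. Define γ₁(t) = ∫_{t−r}^{t} |B·w·cos(w·τ + φ₀)| dτ. Then for every t ∈ ℝ, γ₁(t) ≥ 2B·(1 − cos(r·w/2)). In particular, ∫_{t−r}^{t} |cos(w·τ + φ₀)| dτ ≥ (2 − 2·cos(r·w/2))/w. -/
open Real

lemma cosF_per (L s : ℝ) :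
    (∫ u in (s + π - L/2)..(s + π + L/2), |Real.cos u|) =
    ∫ u in (s - L/2)..(s + L/2), |Real.cos u| := by
  have := intervalIntegral.integral_comp_add_right (a := s - L/2) (b := s + L/2)
    (fun u => |Real.cos u|) π
  rw [show s - L/2 + π = s + π - L/2 by ring, show s + L/2 + π = s + π + L/2 by ring] at this
  rw [← this]
  congr 1
  ext u
  rw [Real.cos_add_pi, abs_neg]

lemma cosF_even (L s : ℝ) :
    (∫ u in (-s - L/2)..(-s + L/2), |Real.cos u|) =
    ∫ u in (s - L/2)..(s + L/2), |Real.cos u| := by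
  have := intervalIntegral.integral_comp_neg (a := s - L/2) (b := s + L/2)
    (fun u => |Real.cos u|)
  simp only [Real.cos_neg] at this
  rw [show -s - L/2 = -(s + L/2) by ring, show -s + L/2 = -(s - L/2) by ring]
  exact this.symm

lemma cosF_core (L : ℝ) (hL : 0 < L) (hL' : L < π) (s : ℝ) (hs0 : 0 ≤ s) (hs1 : s ≤ π/2) :
    (∫ u in (s - L/2)..(s + L/2), |Real.cos u|) ≥ 2 - 2 * Real.cos (L/2) := by
  have hpi := Real.pi_pos
  have hL2 : 0 < L/2 := by linarith
  have hL2' : L/2 < π/2 := by linarith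
  have hcL : 0 ≤ Real.cos (L/2) := Real.cos_nonneg_of_mem_Icc ⟨by linarith, by linarith⟩
  have hsL : 0 ≤ Real.sin (L/2) := Real.sin_nonneg_of_nonneg_of_le_pi (by linarith) (by linarith)
  have hpyth := Real.sin_sq_add_cos_sq (L/2)
  by_cases hc : s + L/2 ≤ π/2
  · have heq : (∫ u in (s - L/2)..(s + L/2), |Real.cos u|) =
        ∫ u in (s - L/2)..(s + L/2), Real.cos u := by
      apply intervalIntegral.integral_congr
      intro u hu
      rw [Set.uIcc_of_le (by linarith)] at hu
      exact abs_of_nonneg (Real.cos_nonneg_of_mem_Icc ⟨by linarith [hu.1], by linarith [hu.2]⟩)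
    rw [heq, integral_cos, Real.sin_sub_sin]
    have h1 : (s + L/2 - (s - L/2))/2 = L/2 := by ring
    have h2 : (s + L/2 + (s - L/2))/2 = s := by ring
    rw [h1, h2]
    have hcoss : Real.cos (π/2 - L/2) ≤ Real.cos s :=
      Real.cos_le_cos_of_nonneg_of_le_pi hs0 (by linarith) (by linarith)
    rw [Real.cos_pi_div_two_sub] at hcoss
    nlinarith [Real.cos_le_one (L/2)]
  · push_neg at hc
    have hint1 : IntervalIntegrable (fun u => |Real.cos u|) MeasureTheory.volume (s - L/2) (π/2) :=
      (Real.continuous_cos.abs).intervalIntegrable _ _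
    have hint2 : IntervalIntegrable (fun u => |Real.cos u|) MeasureTheory.volume (π/2) (s + L/2) :=
      (Real.continuous_cos.abs).intervalIntegrable _ _
    rw [← intervalIntegral.integral_add_adjacent_intervals hint1 hint2]
    have heq1 : (∫ u in (s - L/2)..(π/2), |Real.cos u|) =
        ∫ u in (s - L/2)..(π/2), Real.cos u := by
      apply intervalIntegral.integral_congr
      intro u hu
      rw [Set.uIcc_of_le (by linarith)] at hu
      exact abs_of_nonneg (Real.cos_nonneg_of_mem_Icc ⟨by linarith [hu.1], by linarith [hu.2]⟩)
    have heq2 : (∫ u in (π/2)..(s + L/2), |Real.cos u|) =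
        ∫ u in (π/2)..(s + L/2), -Real.cos u := by
      apply intervalIntegral.integral_congr
      intro u hu
      rw [Set.uIcc_of_le (by linarith)] at hu
      show |Real.cos u| = -Real.cos u
      exact abs_of_nonpos (Real.cos_nonpos_of_pi_div_two_le_of_le (by linarith [hu.1])
        (by linarith [hu.2]))
    rw [heq1, heq2, intervalIntegral.integral_neg, integral_cos, integral_cos,
      Real.sin_pi_div_two]
    have hadd : Real.sin (s + L/2) + Real.sin (s - L/2) = 2 * Real.sin s * Real.cos (L/2) := by
      rw [Real.sin_add, Real.sin_sub]; ring
    nlinarith [Real.sin_le_one s]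

lemma cosF_centered (L : ℝ) (hL : 0 < L) (hL' : L < π) (s : ℝ) :
    (∫ u in (s - L/2)..(s + L/2), |Real.cos u|) ≥ 2 - 2 * Real.cos (L/2) := by
  have hpi := Real.pi_pos
  set n : ℤ := ⌊(s + π/2)/π⌋ with hn
  set s₀ : ℝ := s - n * π with hs₀
  have h1 : (n : ℝ) * π ≤ s + π/2 := (le_div_iff₀ hpi).mp (Int.floor_le _)
  have h2 : s + π/2 < ((n : ℝ) + 1) * π := by
    have := Int.lt_floor_add_one ((s + π/2)/π)
    rw [div_lt_iff₀ hpi] at this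
    linarith
  have hs₀1 : -(π/2) ≤ s₀ := by rw [hs₀]; linarith
  have hs₀2 : s₀ < π/2 := by rw [hs₀]; nlinarith
  have hper : ∀ m : ℕ, ∀ x : ℝ, (∫ u in (x + m * π - L/2)..(x + m * π + L/2), |Real.cos u|) =
      ∫ u in (x - L/2)..(x + L/2), |Real.cos u| := by
    intro m
    induction m with
    | zero => intro x; norm_num
    | succ k ih =>
      intro x
      have hp := cosF_per L (x + k * π)
      rw [show x + (k+1 : ℕ) * π - L/2 = x + k * π + π - L/2 by push_cast; ring,
        show x + (k+1 : ℕ) * π + L/2 = x + k * π + π + L/2 by push_cast; ring]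
      rw [hp, ih x]
  have hshift : (∫ u in (s - L/2)..(s + L/2), |Real.cos u|) =
      ∫ u in (s₀ - L/2)..(s₀ + L/2), |Real.cos u| := by
    rcases le_or_gt 0 n with hn0 | hn0
    · lift n to ℕ using hn0 with m
      have := hper m s₀
      rw [show s₀ + m * π = s by rw [hs₀]; push_cast; ring] at this
      exact this
    · have hmn : 0 ≤ -n := by linarith
      obtain ⟨m, hm⟩ : ∃ m : ℕ, (m : ℤ) = -n := ⟨(-n).toNat, Int.toNat_of_nonneg hmn⟩
      have := hper m s
      rw [show s + m * π = s₀ by rw [hs₀]; rw [show ((m:ℝ)) = ((-n : ℤ) : ℝ) by exact_mod_cast congrArg (Int.cast : ℤ → ℝ) hm]; push_cast; ring] at this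
      exact this.symm
  rw [hshift]
  rcases le_or_gt 0 s₀ with h | h
  · exact cosF_core L hL hL' s₀ h (le_of_lt hs₀2)
  · rw [show s₀ - L/2 = -(-s₀) - L/2 by ring, show s₀ + L/2 = -(-s₀) + L/2 by ring,
      cosF_even L (-s₀)]
    exact cosF_core L hL hL' (-s₀) (by linarith) (by linarith)

lemma cosF_key (L : ℝ) (hL : 0 < L) (hL' : L < π) (a : ℝ) :
    (∫ u in a..(a + L), |Real.cos u|) ≥ 2 - 2 * Real.cos (L/2) := by
  have := cosF_centered L hL hL' (a + L/2)
  rw [show a + L/2 - L/2 = a by ring, show a + L/2 + L/2 = a + L by ring] at this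
  exact this

theorem moving_window_integral_abs_deriv_ge_of_small_window
    (B w φ₀ r : ℝ) (hB : 0 < B) (hw : 0 < w) (hr : 0 < r) (hr' : r < Real.pi / w)
    (γ₁ : ℝ → ℝ)
    (hγ₁ : ∀ t, γ₁ t = ∫ τ in (t - r)..t, |B * w * Real.cos (w * τ + φ₀)|) :
    ∀ t : ℝ, γ₁ t ≥ 2 * B * (1 - Real.cos (r * w / 2)) ∧
      (∫ τ in (t - r)..t, |Real.cos (w * τ + φ₀)|) ≥ (2 - 2 * Real.cos (r * w / 2)) / w := by
  intro t
  have hL : 0 < w * r := by positivity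
  have hL' : w * r < π := by
    have := (lt_div_iff₀ hw).mp hr'
    linarith [mul_comm r w ▸ this]
  have hsub := intervalIntegral.integral_comp_mul_add (a := t - r) (b := t)
    (fun u => |Real.cos u|) (ne_of_gt hw) φ₀
  have hkey := cosF_key (w * r) hL hL' (w * (t - r) + φ₀)
  rw [show w * (t - r) + φ₀ + w * r = w * t + φ₀ by ring] at hkey
  have hmain : (∫ τ in (t - r)..t, |Real.cos (w * τ + φ₀)|) ≥ (2 - 2 * Real.cos (r * w / 2)) / w := by
    rw [hsub, smul_eq_mul, show r * w / 2 = w * r / 2 by ring, div_eq_inv_mul]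
    exact mul_le_mul_of_nonneg_left hkey (by positivity)
  refine ⟨?_, hmain⟩
  rw [hγ₁]
  have heq : (∫ τ in (t - r)..t, |B * w * Real.cos (w * τ + φ₀)|) =
      B * w * ∫ τ in (t - r)..t, |Real.cos (w * τ + φ₀)| := by
    rw [← intervalIntegral.integral_const_mul]
    congr 1; ext τ
    rw [abs_mul, abs_of_pos (by positivity : (0:ℝ) < B * w)]
  rw [heq]
  calc B * w * ∫ τ in (t - r)..t, |Real.cos (w * τ + φ₀)|
      ≥ B * w * ((2 - 2 * Real.cos (r * w / 2)) / w) :=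
        mul_le_mul_of_nonneg_left hmain (by positivity)
    _ = 2 * B * (1 - Real.cos (r * w / 2)) := by field_simp
end

section
/- (Persistent excitation, Proposition 2.) Let B_min > 0 and w_min > 0, let B ≥ B_min, w ≥ w_min, φ₀ ∈ ℝ, and r > 0. Define γ₁(t) = ∫_{t−r}^{t} |B·w·cos(w·τ + φ₀)| dτ. Then for every t ∈ ℝ, γ₁(t) ≥ 2·B_min·(1 − cos(min(r·w_min, π)/2)), and this lower bound is a strictly positive constant independent of t, B, w, and φ₀. -/
open Real intervalIntegral

private lemma abscos_intble (a b : ℝ) :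
    IntervalIntegrable (fun u => |Real.cos u|) MeasureTheory.volume a b :=
  (Real.continuous_cos.abs).intervalIntegrable a b

/-- Evaluation of ∫|cos| on an interval where cos ≥ 0. -/
private lemma int_abscos_pos {a b : ℝ} (hab : a ≤ b) (h1 : -(π/2) ≤ a) (h2 : b ≤ π/2) :
    (∫ u in a..b, |Real.cos u|) = Real.sin b - Real.sin a := by
  rw [intervalIntegral.integral_congr (g := fun u => Real.cos u)]
  · exact integral_cos
  · intro x hx
    rw [Set.uIcc_of_le hab] at hx
    exact abs_of_nonneg (Real.cos_nonneg_of_mem_Icc ⟨le_trans h1 hx.1, le_trans hx.2 h2⟩)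

/-- Evaluation of ∫|cos| on an interval where cos ≤ 0. -/
private lemma int_abscos_neg {a b : ℝ} (hab : a ≤ b) (h1 : π/2 ≤ a) (h2 : b ≤ π + π/2) :
    (∫ u in a..b, |Real.cos u|) = Real.sin a - Real.sin b := by
  rw [intervalIntegral.integral_congr (g := fun u => -Real.cos u)]
  · rw [intervalIntegral.integral_neg, integral_cos]; ring
  · intro x hx
    rw [Set.uIcc_of_le hab] at hx
    exact abs_of_nonpos (Real.cos_nonpos_of_pi_div_two_le_of_le
      (le_trans h1 hx.1) (le_trans hx.2 h2))

/-- Key lemma for a base point in [-π/2, π/2]. -/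
private lemma key0 {m a : ℝ} (hm0 : 0 ≤ m) (hmπ : m ≤ π) (ha1 : -(π/2) ≤ a)
    (ha2 : a ≤ π/2) :
    2 * (1 - Real.cos (m/2)) ≤ ∫ u in a..(a+m), |Real.cos u| := by
  have hπ := Real.pi_pos
  have hcos_half : 0 ≤ Real.cos (m/2) :=
    Real.cos_nonneg_of_mem_Icc ⟨by linarith, by linarith⟩
  by_cases hcase : a + m ≤ π/2
  · -- cos ≥ 0 on the whole interval
    rw [int_abscos_pos (by linarith) ha1 hcase]
    have hid : Real.sin (a+m) - Real.sin a
        = 2 * Real.sin (m/2) * Real.cos (a + m/2) := by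
      have h := Real.sin_sub_sin (a+m) a
      rw [show (a+m - a)/2 = m/2 by ring, show (a+m + a)/2 = a + m/2 by ring] at h
      exact h
    -- cos (a + m/2) ≥ sin (m/2)
    have hb : |a + m/2| ≤ π/2 - m/2 := by
      rw [abs_le]; constructor <;> linarith
    have hc : Real.cos (π/2 - m/2) ≤ Real.cos (a + m/2) := by
      rw [← Real.cos_abs (a + m/2)]
      exact Real.cos_le_cos_of_nonneg_of_le_pi (abs_nonneg _) (by linarith) hb
    rw [show π/2 - m/2 = π/2 - m/2 from rfl, Real.cos_pi_div_two_sub] at hc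
    have hs : 0 ≤ Real.sin (m/2) :=
      Real.sin_nonneg_of_nonneg_of_le_pi (by linarith) (by linarith)
    have hpyth := Real.sin_sq_add_cos_sq (m/2)
    nlinarith [mul_nonneg hs (sub_nonneg.mpr hc),
      mul_nonneg hcos_half (sub_nonneg.mpr (Real.cos_le_one (m/2)))]
  · -- the interval contains π/2, split there
    push_neg at hcase
    have hsplit : (∫ u in a..(π/2), |Real.cos u|) + ∫ u in (π/2)..(a+m), |Real.cos u|
        = ∫ u in a..(a+m), |Real.cos u| :=
      intervalIntegral.integral_add_adjacent_intervals (abscos_intble _ _) (abscos_intble _ _)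
    rw [← hsplit, int_abscos_pos ha2 ha1 le_rfl,
      int_abscos_neg hcase.le le_rfl (by linarith), Real.sin_pi_div_two]
    -- goal: 2*(1 - cos(m/2)) ≤ (1 - sin a) + (1 - sin (a+m))
    have hid : Real.sin (a+m) + Real.sin a
        = 2 * Real.sin (a + m/2) * Real.cos (m/2) := by
      have h := Real.sin_sub_sin (a+m) (-a)
      rw [Real.sin_neg, show (a+m - -a)/2 = a + m/2 by ring,
        show (a+m + -a)/2 = m/2 by ring] at h
      linarith
    have hs1 : Real.sin (a + m/2) ≤ 1 := Real.sin_le_one _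
    nlinarith
  
/-- Key lemma: for any base point. -/
private lemma key {m : ℝ} (a : ℝ) (hm0 : 0 ≤ m) (hmπ : m ≤ π) :
    2 * (1 - Real.cos (m/2)) ≤ ∫ u in a..(a+m), |Real.cos u| := by
  have hπ := Real.pi_pos
  set k : ℤ := ⌊(a + π/2)/π⌋ with hk
  have hfl1 : (k : ℝ) ≤ (a + π/2)/π := Int.floor_le _
  have hfl2 : (a + π/2)/π < k + 1 := Int.lt_floor_add_one _
  set a' : ℝ := a - k * π with ha'
  have ha1 : -(π/2) ≤ a' := by
    have : (k : ℝ) * π ≤ a + π/2 := by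
      rw [le_div_iff₀ hπ] at hfl1; linarith [hfl1]
    simp only [ha']; linarith
  have ha2 : a' ≤ π/2 := by
    have : a + π/2 < ((k : ℝ) + 1) * π := by
      rw [div_lt_iff₀ hπ] at hfl2; linarith [hfl2]
    simp only [ha']; nlinarith
  have hper : Function.Periodic (fun x => |Real.cos x|) π := by
    intro x; simp [Real.cos_add_pi]
  have hper' : ∀ x : ℝ, |Real.cos (x + (k : ℝ) * π)| = |Real.cos x| := fun x =>
    (hper.int_mul k) x
  have hshift : (∫ u in a'..(a'+m), |Real.cos u|) = ∫ u in a..(a+m), |Real.cos u| := by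
    have h := intervalIntegral.integral_comp_add_right (a := a') (b := a' + m)
      (fun u => |Real.cos u|) ((k : ℝ) * π)
    have e1 : a' + (k : ℝ) * π = a := by simp [ha']
    have e2 : a' + m + (k : ℝ) * π = a + m := by simp [ha']; ring
    rw [e1, e2] at h
    rw [← h]
    exact intervalIntegral.integral_congr fun x _ => (hper' x).symm
  rw [← hshift]
  exact key0 hm0 hmπ ha1 ha2

theorem persistent_excitation (Bmin wmin B w φ₀ r : ℝ)
    (hBmin : 0 < Bmin) (hwmin : 0 < wmin) (hB : B ≥ Bmin) (hw : w ≥ wmin)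
    (hr : 0 < r) (γ₁ : ℝ → ℝ)
    (hγ₁ : ∀ t, γ₁ t = ∫ τ in (t - r)..t, |B * w * Real.cos (w * τ + φ₀)|) :
    (∀ t : ℝ, γ₁ t ≥ 2 * Bmin * (1 - Real.cos (min (r * wmin) Real.pi / 2))) ∧
      0 < 2 * Bmin * (1 - Real.cos (min (r * wmin) Real.pi / 2)) := by
  have hπ := Real.pi_pos
  have hwpos : 0 < w := lt_of_lt_of_le hwmin hw
  have hBpos : 0 < B := lt_of_lt_of_le hBmin hB
  set m : ℝ := min (r * wmin) π with hm
  have hm0 : 0 < m := lt_min (mul_pos hr hwmin) hπ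
  have hmπ : m ≤ π := min_le_right _ _
  have hmrw : m ≤ r * w := le_trans (min_le_left _ _) (by nlinarith)
  -- positivity of the bound
  have hcos_lt : Real.cos (m/2) < 1 := by
    have hs : 0 < Real.sin (m/2) :=
      Real.sin_pos_of_pos_of_lt_pi (by linarith) (by linarith)
    have hc1 : Real.cos (m/2) ≤ 1 := Real.cos_le_one _
    nlinarith [Real.sin_sq_add_cos_sq (m/2)]
  have hposbound : 0 < 2 * Bmin * (1 - Real.cos (m/2)) := by nlinarith
  refine ⟨fun t => ?_, hposbound⟩
  rw [hγ₁ t]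
  -- pull out the constant B * w
  have habs : ∀ τ : ℝ, |B * w * Real.cos (w * τ + φ₀)|
      = B * w * |Real.cos (w * τ + φ₀)| := by
    intro τ
    rw [abs_mul, abs_of_pos (mul_pos hBpos hwpos)]
  simp only [habs]
  rw [intervalIntegral.integral_const_mul]
  -- change of variables
  have hcv := intervalIntegral.integral_comp_mul_add (a := t - r) (b := t)
    (fun u => |Real.cos u|) (ne_of_gt hwpos) φ₀
  rw [hcv]
  set α : ℝ := w * (t - r) + φ₀ with hα
  have hend : w * t + φ₀ = α + r * w := by rw [hα]; ring
  rw [hend, smul_eq_mul]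
  -- monotonicity: shrink interval to length m
  have hmono : (∫ u in α..(α+m), |Real.cos u|) ≤ ∫ u in α..(α + r*w), |Real.cos u| :=
    intervalIntegral.integral_mono_interval le_rfl (by linarith) (by linarith)
      (Filter.Eventually.of_forall fun x => abs_nonneg _) (abscos_intble _ _)
  have hkey := key α hm0.le hmπ
  have hI : 2 * (1 - Real.cos (m/2)) ≤ ∫ u in α..(α + r*w), |Real.cos u| :=
    le_trans hkey hmono
  have hw' : w * w⁻¹ = 1 := mul_inv_cancel₀ (ne_of_gt hwpos)
  have : B * w * (w⁻¹ * ∫ u in α..(α + r*w), |Real.cos u|)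
      = B * ∫ u in α..(α + r*w), |Real.cos u| := by
    field_simp
  rw [this]
  have h2 : 0 ≤ 2 * (1 - Real.cos (m/2)) := by nlinarith
  calc 2 * Bmin * (1 - Real.cos (m/2)) = Bmin * (2 * (1 - Real.cos (m/2))) := by ring
    _ ≤ B * (2 * (1 - Real.cos (m/2))) := by nlinarith
    _ ≤ B * ∫ u in α..(α + r*w), |Real.cos u| := by nlinarith
end

section
/- (Scalar fixed-time stability lemma.) Let α > 0, β > 0 and μ > 1 be real numbers, and let V : [0, ∞) → ℝ be a differentiable nonnegative function satisfying V′(t) ≤ −α·V(t)^{1+1/μ} − β·V(t)^{1−1/μ} for all t ≥ 0. Then V(t) = 0 for all t ≥ T*, where T* = π·μ/(2·√(α·β)). In particular the settling time is bounded independently of the initial value V(0). -/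
theorem fixed_time_stability_scalar_lyapunov
    (α β μ : ℝ) (hα : 0 < α) (hβ : 0 < β) (hμ : 1 < μ)
    (V : ℝ → ℝ)
    (hdiff : ∀ t, 0 ≤ t → DifferentiableAt ℝ V t)
    (hnonneg : ∀ t, 0 ≤ t → 0 ≤ V t)
    (hV' : ∀ t, 0 ≤ t →
      deriv V t ≤ -α * V t ^ (1 + 1 / μ : ℝ) - β * V t ^ (1 - 1 / μ : ℝ)) :
    ∀ t, t ≥ Real.pi * μ / (2 * Real.sqrt (α * β)) → V t = 0 := by
  intro t ht
  have hμ0 : (0:ℝ) < μ := by linarith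
  have hαβ : 0 < α * β := mul_pos hα hβ
  have hsab : 0 < Real.sqrt (α * β) := Real.sqrt_pos.2 hαβ
  set c : ℝ := Real.sqrt (α / β) with hcdef
  set K : ℝ := Real.sqrt (α * β) / μ with hKdef
  have hc0 : 0 < c := Real.sqrt_pos.2 (div_pos hα hβ)
  have hK0 : 0 < K := div_pos hsab hμ0
  have hT0 : 0 < Real.pi * μ / (2 * Real.sqrt (α * β)) := by positivity
  have ht0 : 0 ≤ t := (hT0.trans_le ht).le
  by_contra hVt
  have hVtpos : 0 < V t := (hnonneg t ht0).lt_of_ne (Ne.symm hVt)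
  -- V is antitone on [0, t]
  have hanti : AntitoneOn V (Set.Icc 0 t) := by
    apply antitoneOn_of_deriv_nonpos (convex_Icc 0 t)
    · intro s hs
      exact (hdiff s hs.1).continuousAt.continuousWithinAt
    · intro s hs
      rw [interior_Icc] at hs
      exact (hdiff s hs.1.le).differentiableWithinAt
    · intro s hs
      rw [interior_Icc] at hs
      have h0s : (0:ℝ) ≤ s := hs.1.le
      have h1 : 0 ≤ V s ^ (1 + 1/μ : ℝ) := Real.rpow_nonneg (hnonneg s h0s) _
      have h2 : 0 ≤ V s ^ (1 - 1/μ : ℝ) := Real.rpow_nonneg (hnonneg s h0s) _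
      have := hV' s h0s
      nlinarith
  have hVpos : ∀ s ∈ Set.Icc (0:ℝ) t, 0 < V s := fun s hs =>
    hVtpos.trans_le (hanti hs (Set.right_mem_Icc.2 ht0) hs.2)
  -- the auxiliary function
  set W : ℝ → ℝ := fun s => V s ^ (1/μ : ℝ) with hWdef
  set h : ℝ → ℝ := fun s => Real.arctan (c * W s) + K * s with hhdef
  have hder : ∀ s ∈ Set.Icc (0:ℝ) t, HasDerivAt h
      (1 / (1 + (c * W s) ^ 2) * (c * (deriv V s * (1/μ) * V s ^ ((1/μ:ℝ) - 1))) + K * 1) s := by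
    intro s hs
    have hv := (hdiff s hs.1).hasDerivAt
    have h1 : HasDerivAt (fun x => V x ^ (1/μ:ℝ))
        (deriv V s * (1/μ) * V s ^ ((1/μ:ℝ) - 1)) s :=
      hv.rpow_const (Or.inl (hVpos s hs).ne')
    have h2 := (h1.const_mul c).arctan
    exact h2.add ((hasDerivAt_id s).const_mul K)
  -- the key derivative bound
  have key : ∀ s ∈ interior (Set.Icc (0:ℝ) t), deriv h s ≤ 0 := by
    intro s hs
    rw [interior_Icc] at hs
    have hsIcc : s ∈ Set.Icc (0:ℝ) t := ⟨hs.1.le, hs.2.le⟩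
    rw [(hder s hsIcc).deriv]
    set v : ℝ := V s with hvdef
    have hv0 : 0 < v := hVpos s hsIcc
    set w2 : ℝ := v ^ (2/μ : ℝ) with hw2def
    have hw2nn : 0 ≤ w2 := Real.rpow_nonneg hv0.le _
    have hsq : (c * W s) ^ 2 = (α/β) * w2 := by
      have hc2 : c ^ 2 = α/β := Real.sq_sqrt (div_nonneg hα.le hβ.le)
      have hW2 : (W s) ^ 2 = w2 := by
        show (v ^ (1/μ:ℝ)) ^ 2 = v ^ (2/μ:ℝ)
        rw [← Real.rpow_natCast (v ^ (1/μ:ℝ)) 2, ← Real.rpow_mul hv0.le]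
        congr 1
        push_cast
        ring
      rw [mul_pow, hc2, hW2]
    have hA : v ^ ((1/μ:ℝ) - 1) * v ^ (1 + 1/μ : ℝ) = w2 := by
      rw [← Real.rpow_add hv0]
      congr 1
      ring
    have hB : v ^ ((1/μ:ℝ) - 1) * v ^ (1 - 1/μ : ℝ) = 1 := by
      rw [← Real.rpow_add hv0]
      norm_num
    have hcβ : c * β = Real.sqrt (α * β) := by
      have h2 : (c * β) ^ 2 = α * β := by
        have hc2 : c ^ 2 = α / β := Real.sq_sqrt (div_nonneg hα.le hβ.le)
        rw [mul_pow, hc2]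
        field_simp
      rw [← h2, Real.sqrt_sq (by positivity)]
    have hpow_nn : (0:ℝ) ≤ v ^ ((1/μ:ℝ) - 1) := Real.rpow_nonneg hv0.le _
    -- bound for the numerator
    have hnum : c * (deriv V s * (1/μ) * v ^ ((1/μ:ℝ) - 1)) ≤ -K * (1 + (α/β) * w2) := by
      have hd := hV' s hs.1.le
      have step : deriv V s * v ^ ((1/μ:ℝ) - 1) ≤ -(α * w2 + β) := by
        have := mul_le_mul_of_nonneg_right hd hpow_nn
        calc deriv V s * v ^ ((1/μ:ℝ) - 1)
            ≤ (-α * v ^ (1 + 1/μ : ℝ) - β * v ^ (1 - 1/μ : ℝ)) * v ^ ((1/μ:ℝ) - 1) := this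
          _ = -(α * (v ^ ((1/μ:ℝ) - 1) * v ^ (1 + 1/μ : ℝ))
                + β * (v ^ ((1/μ:ℝ) - 1) * v ^ (1 - 1/μ : ℝ))) := by ring
          _ = -(α * w2 + β) := by rw [hA, hB]; ring
      have hcμ : (0:ℝ) ≤ c * (1/μ) := by positivity
      have := mul_le_mul_of_nonneg_left step hcμ
      have hKβ : K * β = c * β * (1/μ) * β := by
        rw [hcβ, hKdef]; ring
      have hKid : K = c * β * (1/μ) := by
        rw [hcβ, hKdef]; ring
      calc c * (deriv V s * (1/μ) * v ^ ((1/μ:ℝ) - 1))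
          = c * (1/μ) * (deriv V s * v ^ ((1/μ:ℝ) - 1)) := by ring
        _ ≤ c * (1/μ) * (-(α * w2 + β)) := this
        _ = -(c * β * (1/μ)) * (1 + (α/β) * w2) := by field_simp; ring
        _ = -K * (1 + (α/β) * w2) := by rw [← hKid]
    have hD : 0 < 1 + (c * W s) ^ 2 := by positivity
    rw [hsq] at hD ⊢
    have h1 : 1 / (1 + (α/β) * w2) * (c * (deriv V s * (1/μ) * v ^ ((1/μ:ℝ) - 1)))
        ≤ 1 / (1 + (α/β) * w2) * (-K * (1 + (α/β) * w2)) :=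
      mul_le_mul_of_nonneg_left hnum (by positivity)
    have h2 : 1 / (1 + (α/β) * w2) * (-K * (1 + (α/β) * w2)) = -K := by
      field_simp
    rw [h2] at h1
    linarith
  -- h is antitone on [0, t]
  have hhanti : AntitoneOn h (Set.Icc 0 t) := by
    apply antitoneOn_of_deriv_nonpos (convex_Icc 0 t)
    · intro s hs
      exact (hder s hs).continuousAt.continuousWithinAt
    · intro s hs
      exact (hder s (interior_subset hs)).differentiableAt.differentiableWithinAt
    · exact key
  have hmono := hhanti (Set.left_mem_Icc.2 ht0) (Set.right_mem_Icc.2 ht0) ht0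
  -- derive the contradiction
  have harctan_pos : 0 < Real.arctan (c * W t) := by
    have := Real.arctan_strictMono (mul_pos hc0 (Real.rpow_pos_of_pos hVtpos (1/μ)))
    rwa [Real.arctan_zero] at this
  have harctan_lt : Real.arctan (c * W 0) < Real.pi / 2 := Real.arctan_lt_pi_div_two _
  have hKT : K * (Real.pi * μ / (2 * Real.sqrt (α * β))) = Real.pi / 2 := by
    rw [hKdef]
    field_simp
  have hKt : Real.pi / 2 ≤ K * t := by
    rw [← hKT]
    exact mul_le_mul_of_nonneg_left ht hK0.le
  simp only [hhdef] at hmono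
  linarith
end

section
/- (Fixed-time convergence of the signed-power scalar ODE.) Let α₁ > 0 and β₁ > 0 be real numbers, let p, q be positive integers with q < p, and let t₀ ∈ ℝ. Suppose e : [t₀, ∞) → ℝ is differentiable and satisfies e′(t) = −α₁·⌊e(t)⌉^{1+q/p} − β₁·⌊e(t)⌉^{1−q/p} for all t ≥ t₀. Then e(t) = 0 for all t ≥ t₀ + T*, where T* = π·p/(2·q·√(α₁·β₁)). The settling time bound T* is independent of the initial value e(t₀). -/
/-- The signed power `⌊x⌉^a = |x|^a · sign(x)`. -/
noncomputable def spow (x a : ℝ) : ℝ := |x| ^ a * Real.sign x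

/-!
While `e ≠ 0`, the quantity `y = |e|^r` with `r = q/p` obeys the Riccati equation
`y' = -r (α y² + β)`, so `arctan (√(α/β) · y)` decreases at the constant rate `r √(αβ)`.
It starts below `π/2` and stays positive as long as `e ≠ 0`, hence `e` must vanish before
time `π / (2 r √(αβ))`; since `e²` is nonincreasing, `e` stays zero afterwards.
-/

open Real Set

noncomputable def signedPowerField (α β r x : ℝ) : ℝ :=
  -α * spow x (1 + r) - β * spow x (1 - r)

lemma mul_spow_nonneg (x a : ℝ) : 0 ≤ x * spow x a := by
  have h : x * spow x a = |x| ^ a * (Real.sign x * x) := by unfold spow; ring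
  rw [h]
  exact mul_nonneg (rpow_nonneg (abs_nonneg x) a) (Real.sign_mul_nonneg x)

lemma mul_signedPowerField_nonpos {α β : ℝ} (hα : 0 ≤ α) (hβ : 0 ≤ β) (r x : ℝ) :
    x * signedPowerField α β r x ≤ 0 := by
  have h₁ := mul_nonneg hα (mul_spow_nonneg x (1 + r))
  have h₂ := mul_nonneg hβ (mul_spow_nonneg x (1 - r))
  unfold signedPowerField
  linarith

lemma antitoneOn_sq_of_hasDerivAt {f : ℝ → ℝ} (hf : ∀ x, x * f x ≤ 0) {e : ℝ → ℝ} {t₀ : ℝ}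
    (hde : ∀ s ≥ t₀, HasDerivAt e (f (e s)) s) : AntitoneOn (fun s => e s ^ 2) (Ici t₀) := by
  have hsq : ∀ s ≥ t₀, HasDerivAt (fun s => e s ^ 2) (2 * (e s * f (e s))) s := fun s hs =>
    ((hde s hs).fun_pow 2).congr_deriv (by push_cast; ring)
  refine antitoneOn_of_hasDerivWithinAt_nonpos (f' := fun s => 2 * (e s * f (e s)))
    (convex_Ici t₀) (fun s hs => (hsq s hs).continuousAt.continuousWithinAt)
    (fun s hs => ?_) (fun s _ => ?_)
  · rw [interior_Ici] at hs
    exact (hsq s (le_of_lt hs)).hasDerivWithinAt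
  · linarith [hf (e s)]

lemma Real.sign_eq_signType_sign (x : ℝ) : Real.sign x = (SignType.sign x : ℝ) := by
  rcases lt_trichotomy x 0 with h | rfl | h
  · simp [Real.sign_of_neg h, h]
  · simp [Real.sign_zero]
  · simp [Real.sign_of_pos h, h]

lemma HasDerivAt.abs_rpow {e : ℝ → ℝ} {D s : ℝ} (hd : HasDerivAt e D s) (hne : e s ≠ 0)
    (r : ℝ) : HasDerivAt (fun u => |e u| ^ r) (Real.sign (e s) * D * r * |e s| ^ (r - 1)) s := by
  rw [Real.sign_eq_signType_sign]
  exact ((hasDerivAt_abs hne).comp s hd).rpow_const (Or.inl (abs_ne_zero.2 hne))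

lemma hasDerivAt_abs_rpow_of_signedPowerField {α β r s : ℝ} {e : ℝ → ℝ}
    (hd : HasDerivAt e (signedPowerField α β r (e s)) s) (hne : e s ≠ 0) :
    HasDerivAt (fun u => |e u| ^ r) (-r * (α * (|e s| ^ r) ^ 2 + β)) s := by
  convert hd.abs_rpow hne r using 1
  have hA : 0 < |e s| := abs_pos.2 hne
  have hsign : Real.sign (e s) * Real.sign (e s) = 1 := by
    rcases (e s).sign_apply_eq_of_ne_zero hne with h | h <;> rw [h] <;> norm_num
  have hplus : |e s| ^ (1 + r) * |e s| ^ (r - 1) = (|e s| ^ r) ^ 2 := by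
    rw [← rpow_add hA, ← rpow_natCast, ← rpow_mul hA.le]; ring_nf
  have hminus : |e s| ^ (1 - r) * |e s| ^ (r - 1) = 1 := by
    rw [← rpow_add hA, show 1 - r + (r - 1) = 0 by ring, rpow_zero]
  unfold signedPowerField spow
  linear_combination (r * (α * (|e s| ^ (1 + r) * |e s| ^ (r - 1)) +
    β * (|e s| ^ (1 - r) * |e s| ^ (r - 1)))) * hsign + r * α * hplus + r * β * hminus

lemma hasDerivAt_arctan_of_riccati {α β r s : ℝ} (hα : 0 ≤ α) (hβ : 0 < β) {y : ℝ → ℝ}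
    (hy : HasDerivAt y (-r * (α * y s ^ 2 + β)) s) :
    HasDerivAt (fun u => arctan (√(α / β) * y u)) (-(r * √(α * β))) s := by
  set k := √(α / β)
  have hk : k ^ 2 = α / β := sq_sqrt (div_nonneg hα hβ.le)
  have hkβ : k * β = √(α * β) := by
    rw [show α * β = α / β * β ^ 2 by field_simp, sqrt_mul (div_nonneg hα hβ.le), sqrt_sq hβ.le]
  refine ((hasDerivAt_arctan (k * y s)).comp s (hy.const_mul k)).congr_deriv ?_
  rw [← hkβ]
  field_simp
  rw [hk]
  field_simp
  ring

lemma eq_add_mul_sub_of_hasDerivAt {φ : ℝ → ℝ} {a b c : ℝ} (hab : a ≤ b)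
    (hφ : ∀ s ∈ Icc a b, HasDerivAt φ c s) : φ b = φ a + c * (b - a) := by
  have hψ : ∀ s ∈ Icc a b, HasDerivAt (fun u => φ u - c * u) 0 s := fun s hs =>
    ((hφ s hs).sub ((hasDerivAt_id s).const_mul c)).congr_deriv (by ring)
  have := constant_of_has_deriv_right_zero (fun s hs => (hψ s hs).continuousAt.continuousWithinAt)
    (fun s hs => (hψ s (Ico_subset_Icc_self hs)).hasDerivWithinAt) b ⟨hab, le_rfl⟩
  linarith

theorem eq_zero_of_hasDerivAt_signedPowerField {α β r t₀ : ℝ} (hα : 0 < α) (hβ : 0 < β)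
    (hr : 0 < r) {e : ℝ → ℝ} (hde : ∀ s ≥ t₀, HasDerivAt e (signedPowerField α β r (e s)) s) :
    ∀ t ≥ t₀ + π / (2 * r * √(α * β)), e t = 0 := by
  intro t ht
  by_contra hne
  have hc : 0 < r * √(α * β) := mul_pos hr (sqrt_pos.2 (mul_pos hα hβ))
  have hsettle : π / 2 ≤ r * √(α * β) * (t - t₀) := by
    rw [show π / (2 * r * √(α * β)) = π / 2 / (r * √(α * β)) by ring] at ht
    rw [← div_le_iff₀' hc]
    linarith
  have ht₀ : t₀ ≤ t := by nlinarith [pi_pos]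
  have hnz : ∀ s ∈ Icc t₀ t, e s ≠ 0 := fun s hs hs0 => hne <| by
    have := antitoneOn_sq_of_hasDerivAt (mul_signedPowerField_nonpos hα.le hβ.le r) hde
      (mem_Ici.2 hs.1) (mem_Ici.2 ht₀) hs.2
    simp only [hs0] at this
    nlinarith [sq_nonneg (e t)]
  have hφ : ∀ s ∈ Icc t₀ t,
      HasDerivAt (fun u => arctan (√(α / β) * |e u| ^ r)) (-(r * √(α * β))) s := fun s hs =>
    hasDerivAt_arctan_of_riccati hα.le hβ <|
      hasDerivAt_abs_rpow_of_signedPowerField (hde s hs.1) (hnz s hs)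
  have hφt : 0 < arctan (√(α / β) * |e t| ^ r) := by
    have : 0 < √(α / β) * |e t| ^ r :=
      mul_pos (sqrt_pos.2 (div_pos hα hβ)) (rpow_pos_of_pos (abs_pos.2 hne) r)
    simpa using arctan_strictMono this
  have hφt₀ := arctan_lt_pi_div_two (√(α / β) * |e t₀| ^ r)
  have := eq_add_mul_sub_of_hasDerivAt ht₀ hφ
  linarith

theorem fixed_time_convergence_signed_power_ode_general
    (α₁ β₁ : ℝ) (hα₁ : 0 < α₁) (hβ₁ : 0 < β₁)
    (p q : ℕ) (hp : 0 < p) (hq : 0 < q)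
    (t₀ : ℝ) (e : ℝ → ℝ)
    (hdiff : ∀ t, t₀ ≤ t → DifferentiableAt ℝ e t)
    (he' : ∀ t, t₀ ≤ t → deriv e t =
      -α₁ * spow (e t) (1 + (q : ℝ) / p) - β₁ * spow (e t) (1 - (q : ℝ) / p)) :
    ∀ t, t ≥ t₀ + Real.pi * p / (2 * q * Real.sqrt (α₁ * β₁)) → e t = 0 := by
  have hp' : (0 : ℝ) < p := Nat.cast_pos.2 hp
  have hq' : (0 : ℝ) < q := Nat.cast_pos.2 hq
  have hT : π * p / (2 * q * √(α₁ * β₁)) = π / (2 * (q / p) * √(α₁ * β₁)) := by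
    field_simp
  intro t ht
  refine eq_zero_of_hasDerivAt_signedPowerField hα₁ hβ₁ (div_pos hq' hp') (fun s hs => ?_) t
    (hT ▸ ht)
  rw [signedPowerField, ← he' s hs]
  exact (hdiff s hs).hasDerivAt

theorem fixed_time_convergence_signed_power_ode
    (α₁ β₁ : ℝ) (hα₁ : 0 < α₁) (hβ₁ : 0 < β₁)
    (p q : ℕ) (hp : 0 < p) (hq : 0 < q) (hqp : q < p)
    (t₀ : ℝ) (e : ℝ → ℝ)
    (hdiff : ∀ t, t₀ ≤ t → DifferentiableAt ℝ e t)
    (he' : ∀ t, t₀ ≤ t → deriv e t =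
      -α₁ * spow (e t) (1 + (q : ℝ) / p) - β₁ * spow (e t) (1 - (q : ℝ) / p)) :
    ∀ t, t ≥ t₀ + Real.pi * p / (2 * q * Real.sqrt (α₁ * β₁)) → e t = 0 :=
  fixed_time_convergence_signed_power_ode_general α₁ β₁ hα₁ hβ₁ p q hp hq t₀ e hdiff he'
end

section
/- (Idealized Theorem 1 with exact derivatives.) Let A ∈ ℝ, B > 0, w > 0, φ₀ ∈ ℝ, r > 0, and define y(t) = A + B·sin(w·t + φ₀), ζ = w², γ₁(t) = ∫_{t−r}^{t} |y⁽¹⁾(τ)| dτ and γ₂(t) = ∫_{t−r}^{t} |y⁽³⁾(τ)| dτ. Let α₁ > 0, β₁ > 0, let p, q be positive integers with q < p, let t₀ ∈ ℝ, and suppose ζ̂ : [t₀, ∞) → ℝ is differentiable and satisfies, for all t ≥ t₀, ζ̂′(t) = −γ₁(t)⁻¹·( α₁·⌊e(t)⌉^{1+q/p} + β₁·⌊e(t)⌉^{1−q/p} + ζ̂(t)·(|y⁽¹⁾(t)| − |y⁽¹⁾(t−r)|) − (|y⁽³⁾(t)| − |y⁽³⁾(t−r)|) ), where e(t) = ζ̂(t)·γ₁(t)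 − γ₂(t). Then ζ̂(t) = w² and |ζ̂(t)|^{1/2} = w for all t ≥ t₀ + π·p/(2·q·√(α₁·β₁)). -/
open Real Set

theorem deriv_mul_sin_mul_add (c w φ : ℝ) :
    deriv (fun t => c * sin (w * t + φ)) = fun t => c * w * cos (w * t + φ) := by
  ext t
  rw [((((hasDerivAt_id' t).const_mul w).add_const φ).sin.const_mul c).deriv]
  ring

theorem deriv_mul_cos_mul_add (c w φ : ℝ) :
    deriv (fun t => c * cos (w * t + φ)) = fun t => -(c * w) * sin (w * t + φ) := by
  ext t
  rw [((((hasDerivAt_id' t).const_mul w).add_const φ).cos.const_mul c).deriv]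
  ring

theorem deriv_const_add_mul_sin (A B w φ : ℝ) :
    deriv (fun t => A + B * sin (w * t + φ)) = fun t => B * w * cos (w * t + φ) := by
  ext t
  rw [deriv_const_add, deriv_mul_sin_mul_add]

theorem abs_iterate_deriv_three_const_add_mul_sin (A B φ : ℝ) {w : ℝ} (hw : 0 ≤ w) (t : ℝ) :
    |deriv^[3] (fun t => A + B * sin (w * t + φ)) t|
      = w ^ 2 * |deriv (fun t => A + B * sin (w * t + φ)) t| := by
  simp only [Function.iterate_succ, Function.iterate_zero, Function.comp_apply, id,
    deriv_const_add_mul_sin, deriv_mul_cos_mul_add, deriv_mul_sin_mul_add, abs_mul, abs_neg,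
    abs_of_nonneg hw]
  ring

theorem Continuous.hasDerivAt_integral_sub_const_left {f : ℝ → ℝ} (hf : Continuous f)
    (r t : ℝ) :
    HasDerivAt (fun s => ∫ τ in (s - r)..s, f τ) (f t - f (t - r)) t := by
  have hF (s : ℝ) : HasDerivAt (fun u => ∫ τ in (0 : ℝ)..u, f τ) (f s) s :=
    (hf.integral_hasStrictDerivAt 0 s).hasDerivAt
  refine ((hF t).sub ((hF (t - r)).comp_sub_const t r)).congr_of_eventuallyEq
    (Filter.Eventually.of_forall fun s => ?_)
  exact (intervalIntegral.integral_interval_sub_left (hf.intervalIntegrable _ _)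
    (hf.intervalIntegrable _ _)).symm

theorem exists_mem_Icc_cos_mul_add_ne_zero {w : ℝ} (hw : w ≠ 0) (φ : ℝ) {a b : ℝ}
    (hab : a < b) : ∃ τ ∈ Icc a b, cos (w * τ + φ) ≠ 0 := by
  by_contra! hcos
  obtain ⟨c, hac, hcb⟩ := exists_between hab
  have hderiv := (((hasDerivAt_id' c).const_mul w).add_const φ).cos
  have hzero : HasDerivAt (fun τ => cos (w * τ + φ)) 0 c :=
    (hasDerivAt_const c 0).congr_of_eventuallyEq <|
      Filter.mem_of_superset (Icc_mem_nhds hac hcb) fun τ hτ => hcos τ hτ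
  have hsin : sin (w * c + φ) = 0 := by simpa [hw] using hderiv.unique hzero
  have := sin_sq_add_cos_sq (w * c + φ)
  rw [hsin, hcos c ⟨hac.le, hcb.le⟩] at this
  norm_num at this

theorem integral_abs_mul_cos_mul_add_pos {c w : ℝ} (hc : c ≠ 0) (hw : w ≠ 0) (φ : ℝ)
    {a b : ℝ} (hab : a < b) : 0 < ∫ τ in a..b, |c * cos (w * τ + φ)| := by
  obtain ⟨τ, hτ, hcos⟩ := exists_mem_Icc_cos_mul_add_ne_zero hw φ hab
  exact intervalIntegral.integral_pos hab (by fun_prop) (fun _ _ => abs_nonneg _)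
    ⟨τ, hτ, abs_pos.2 (mul_ne_zero hc hcos)⟩

theorem hasDerivAt_sub_mul_of_adaptive_law {ζhat γ : ℝ → ℝ} {ζ F γ' t : ℝ}
    (hγ : HasDerivAt γ γ' t) (hγt : γ t ≠ 0)
    (hζ : HasDerivAt ζhat (-(γ t)⁻¹ * (F + ζhat t * γ' - ζ * γ')) t) :
    HasDerivAt (fun s => (ζhat s - ζ) * γ s) (-F) t := by
  refine ((hζ.sub_const ζ).fun_mul hγ).congr_deriv ?_
  field_simp
  ring

theorem sign_mul_spow {x : ℝ} (hx : x ≠ 0) (a : ℝ) : Real.sign x * spow x a = |x| ^ a := by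
  rcases hx.lt_or_gt with h | h <;> simp [spow, Real.sign_of_neg, Real.sign_of_pos, h]

theorem HasDerivAt.abs_rpow_s10 {f : ℝ → ℝ} {f' x : ℝ} (hf : HasDerivAt f f' x) (hx : f x ≠ 0)
    (m : ℝ) :
    HasDerivAt (fun t => |f t| ^ m) (m * |f x| ^ (m - 1) * (Real.sign (f x) * f')) x := by
  have habs : HasDerivAt (fun t => |f t|) (Real.sign (f x) * f') x := by
    rcases hx.lt_or_gt with h | h
    · simpa [Real.sign_of_neg h, Function.comp_def] using (hasDerivAt_abs_neg h).comp x hf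
    · simpa [Real.sign_of_pos h, Function.comp_def] using (hasDerivAt_abs_pos h).comp x hf
  exact (hasDerivAt_rpow_const (Or.inl (abs_ne_zero.2 hx))).comp x habs

theorem hasDerivAt_arctan_mul_abs_rpow {e : ℝ → ℝ} {α β m t : ℝ}
    (hα : 0 < α) (hβ : 0 < β)
    (he : HasDerivAt e (-(α * spow (e t) (1 + m) + β * spow (e t) (1 - m))) t)
    (het : e t ≠ 0) :
    HasDerivAt (fun s => arctan (√α / √β * |e s| ^ m)) (-(m * √(α * β))) t := by
  convert ((he.abs_rpow_s10 het m).const_mul (√α / √β)).arctan using 1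
  have hx : 0 < |e t| := abs_pos.2 het
  have hsign : Real.sign (e t) * -(α * spow (e t) (1 + m) + β * spow (e t) (1 - m))
      = -(α * |e t| ^ (1 + m) + β * |e t| ^ (1 - m)) := by
    rw [← sign_mul_spow het, ← sign_mul_spow het]; ring
  have h₁ : |e t| ^ (m - 1) * |e t| ^ (1 + m) = (|e t| ^ m) ^ 2 := by
    rw [← rpow_add hx, ← rpow_natCast, ← rpow_mul hx.le]; ring_nf
  have h₂ : |e t| ^ (m - 1) * |e t| ^ (1 - m) = 1 := by
    rw [← rpow_add hx]; simp
  have hpow : m * |e t| ^ (m - 1) * -(α * |e t| ^ (1 + m) + β * |e t| ^ (1 - m))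
      = -(m * (α * (|e t| ^ m) ^ 2 + β)) := by
    linear_combination (-m * α) * h₁ + (-m * β) * h₂
  have hα' : √α ^ 2 = α := sq_sqrt hα.le
  have hβ' : √β ^ 2 = β := sq_sqrt hβ.le
  rw [hsign, ← mul_assoc, hpow, sqrt_mul hα.le]
  field_simp
  rw [hα', hβ']
  ring

theorem eq_zero_of_hasDerivAt_neg_of_nonneg {W : ℝ → ℝ} {κ t₀ : ℝ} (hκ : 0 < κ)
    (hW : ∀ t, t₀ ≤ t → 0 ≤ W t) (hcont : ∀ t, t₀ ≤ t → ContinuousAt W t)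
    (hderiv : ∀ t, t₀ ≤ t → W t ≠ 0 → HasDerivAt W (-κ) t) :
    ∀ t, t₀ + W t₀ / κ ≤ t → W t = 0 := by
  intro t ht
  have htt₀ : t₀ ≤ t := by have := div_nonneg (hW t₀ le_rfl) hκ.le; linarith
  by_contra hWt
  have hpos : 0 < W t := (hW t htt₀).lt_of_ne' hWt
  have hslope (a : ℝ) (ha : t₀ ≤ a) (hat : a < t) (hne : ∀ s ∈ Ioo a t, W s ≠ 0) :
      W t = W a - κ * (t - a) := by
    obtain ⟨c, -, hc⟩ := exists_hasDerivAt_eq_slope W (fun _ => -κ) hat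
      (fun s hs => (hcont s (ha.trans hs.1)).continuousWithinAt)
      (fun s hs => hderiv s (ha.trans hs.1.le) (hne s hs))
    rw [eq_div_iff (sub_ne_zero.2 hat.ne')] at hc
    linarith
  have hWcont : ContinuousOn W (Icc t₀ t) := fun s hs => (hcont s hs.1).continuousWithinAt
  have hZ : IsCompact (Icc t₀ t ∩ W ⁻¹' {0}) := isCompact_Icc.of_isClosed_subset
    (hWcont.preimage_isClosed_of_isClosed isClosed_Icc isClosed_singleton) inter_subset_left
  -- After the last zero of `W` in `[t₀, t]` (or after `t₀` if there is none), `W` has slope `-κ`.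
  rcases (Icc t₀ t ∩ W ⁻¹' {0}).eq_empty_or_nonempty with hempty | hnonempty
  · have hne (s : ℝ) (hs : s ∈ Icc t₀ t) : W s ≠ 0 := fun h => hempty.subset ⟨hs, h⟩
    have hW₀ : 0 < W t₀ := (hW t₀ le_rfl).lt_of_ne' (hne t₀ ⟨le_rfl, htt₀⟩)
    have hκt : W t₀ ≤ κ * (t - t₀) := by
      rw [← div_le_iff₀' hκ]; linarith
    have := hslope t₀ le_rfl (by linarith [div_pos hW₀ hκ])
      fun s hs => hne s ⟨hs.1.le, hs.2.le⟩
    linarith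
  · obtain ⟨u, ⟨⟨hu₀, hut⟩, hWu⟩, hmax⟩ := hZ.exists_isGreatest hnonempty
    have hut' : u < t := hut.lt_of_ne fun h => hWt (h ▸ hWu)
    have := hslope u hu₀ hut'
      fun s hs hWs => (hmax ⟨⟨hu₀.trans hs.1.le, hs.2.le⟩, hWs⟩).not_gt hs.1
    rw [hWu] at this
    nlinarith

theorem eq_zero_of_hasDerivAt_neg_spow_add_spow {e : ℝ → ℝ} {α β m t₀ : ℝ} (hα : 0 < α)
    (hβ : 0 < β) (hm : 0 < m) (hcont : ∀ t, t₀ ≤ t → ContinuousAt e t)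
    (hderiv : ∀ t, t₀ ≤ t → e t ≠ 0 →
      HasDerivAt e (-(α * spow (e t) (1 + m) + β * spow (e t) (1 - m))) t) :
    ∀ t, t₀ + π / (2 * m * √(α * β)) ≤ t → e t = 0 := by
  set W : ℝ → ℝ := fun s => arctan (√α / √β * |e s| ^ m)
  have hW_eq_zero (s : ℝ) : W s = 0 ↔ e s = 0 := by
    simp [W, arctan_eq_zero_iff, rpow_eq_zero (abs_nonneg _) hm.ne', (sqrt_pos.2 hα).ne',
      (sqrt_pos.2 hβ).ne']
  have hκ : 0 < m * √(α * β) := by positivity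
  have hdecay := eq_zero_of_hasDerivAt_neg_of_nonneg hκ
    (fun s _ => arctan_nonneg.2 (by positivity : 0 ≤ √α / √β * |e s| ^ m))
    (fun s hs => continuous_arctan.continuousAt.comp (continuousAt_const.mul
      ((continuousAt_rpow_const _ m (Or.inr hm.le)).comp (hcont s hs).abs)))
    (fun s hs hWs => hasDerivAt_arctan_mul_abs_rpow hα hβ
      (hderiv s hs ((hW_eq_zero s).not.1 hWs)) ((hW_eq_zero s).not.1 hWs))
  intro t ht
  refine (hW_eq_zero t).1 (hdecay t ?_)
  calc t₀ + W t₀ / (m * √(α * β)) ≤ t₀ + π / 2 / (m * √(α * β)) := by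
        gcongr; exact (arctan_lt_pi_div_two _).le
    _ = t₀ + π / (2 * m * √(α * β)) := by ring
    _ ≤ t := ht

theorem fixed_time_frequency_estimation_exact_derivatives_general
    (A B w φ₀ r : ℝ) (hB : 0 < B) (hw : 0 < w) (hr : 0 < r)
    (y γ₁ γ₂ : ℝ → ℝ)
    (hy : ∀ t, y t = A + B * Real.sin (w * t + φ₀))
    (hγ₁ : ∀ t, γ₁ t = ∫ τ in (t - r)..t, |deriv y τ|)
    (hγ₂ : ∀ t, γ₂ t = ∫ τ in (t - r)..t, |deriv^[3] y τ|)
    (α₁ β₁ : ℝ) (hα₁ : 0 < α₁) (hβ₁ : 0 < β₁)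
    (p q : ℕ) (hp : 0 < p) (hq : 0 < q)
    (t₀ : ℝ) (ζhat : ℝ → ℝ) (e : ℝ → ℝ)
    (he : ∀ t, e t = ζhat t * γ₁ t - γ₂ t)
    (hdiff : ∀ t, t₀ ≤ t → DifferentiableAt ℝ ζhat t)
    (hlaw : ∀ t, t₀ ≤ t → deriv ζhat t =
      -(γ₁ t)⁻¹ * (α₁ * spow (e t) (1 + (q : ℝ) / p) + β₁ * spow (e t) (1 - (q : ℝ) / p)
        + ζhat t * (|deriv y t| - |deriv y (t - r)|)
        - (|deriv^[3] y t| - |deriv^[3] y (t - r)|))) :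
    ∀ t, t ≥ t₀ + Real.pi * p / (2 * q * Real.sqrt (α₁ * β₁)) →
      ζhat t = w ^ 2 ∧ |ζhat t| ^ ((1 : ℝ) / 2) = w := by
  have hy₁ : deriv y = fun t => B * w * cos (w * t + φ₀) := by
    rw [funext hy, deriv_const_add_mul_sin]
  have habs₃ (t : ℝ) : |deriv^[3] y t| = w ^ 2 * |deriv y t| := by
    rw [funext hy, abs_iterate_deriv_three_const_add_mul_sin A B φ₀ hw.le]
  have hγ₁_deriv (t : ℝ) : HasDerivAt γ₁ (|deriv y t| - |deriv y (t - r)|) t := by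
    rw [funext hγ₁]
    exact Continuous.hasDerivAt_integral_sub_const_left (by rw [hy₁]; fun_prop) r t
  have hγ₁_pos (t : ℝ) : 0 < γ₁ t := by
    rw [hγ₁, hy₁]
    exact integral_abs_mul_cos_mul_add_pos (mul_pos hB hw).ne' hw.ne' φ₀ (by linarith)
  have he_eq (t : ℝ) : e t = (ζhat t - w ^ 2) * γ₁ t := by
    simp only [he, hγ₂, hγ₁, habs₃, intervalIntegral.integral_const_mul]
    ring
  have he_deriv (t : ℝ) (ht : t₀ ≤ t) : HasDerivAt e
      (-(α₁ * spow (e t) (1 + (q : ℝ) / p) + β₁ * spow (e t) (1 - (q : ℝ) / p))) t := by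
    have hζ := (hdiff t ht).hasDerivAt
    rw [hlaw t ht, habs₃, habs₃, ← mul_sub] at hζ
    exact (hasDerivAt_sub_mul_of_adaptive_law (hγ₁_deriv t) (hγ₁_pos t).ne' hζ)
      |>.congr_of_eventuallyEq (Filter.Eventually.of_forall he_eq)
  intro t ht
  have het : e t = 0 := eq_zero_of_hasDerivAt_neg_spow_add_spow hα₁ hβ₁ (by positivity)
    (fun s hs => (he_deriv s hs).continuousAt) (fun s hs _ => he_deriv s hs) t
    (by convert ht using 2; field_simp)
  have hζ : ζhat t = w ^ 2 := by
    rw [he_eq, mul_eq_zero, sub_eq_zero] at het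
    exact het.resolve_right (hγ₁_pos t).ne'
  refine ⟨hζ, ?_⟩
  rw [hζ, abs_of_nonneg (by positivity), ← sqrt_eq_rpow, sqrt_sq hw.le]

theorem fixed_time_frequency_estimation_exact_derivatives
    (A B w φ₀ r : ℝ) (hB : 0 < B) (hw : 0 < w) (hr : 0 < r)
    (y γ₁ γ₂ : ℝ → ℝ)
    (hy : ∀ t, y t = A + B * Real.sin (w * t + φ₀))
    (hγ₁ : ∀ t, γ₁ t = ∫ τ in (t - r)..t, |deriv y τ|)
    (hγ₂ : ∀ t, γ₂ t = ∫ τ in (t - r)..t, |deriv^[3] y τ|)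
    (α₁ β₁ : ℝ) (hα₁ : 0 < α₁) (hβ₁ : 0 < β₁)
    (p q : ℕ) (hp : 0 < p) (hq : 0 < q) (hqp : q < p)
    (t₀ : ℝ) (ζhat : ℝ → ℝ) (e : ℝ → ℝ)
    (he : ∀ t, e t = ζhat t * γ₁ t - γ₂ t)
    (hdiff : ∀ t, t₀ ≤ t → DifferentiableAt ℝ ζhat t)
    (hlaw : ∀ t, t₀ ≤ t → deriv ζhat t =
      -(γ₁ t)⁻¹ * (α₁ * spow (e t) (1 + (q : ℝ) / p) + β₁ * spow (e t) (1 - (q : ℝ) / p)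
        + ζhat t * (|deriv y t| - |deriv y (t - r)|)
        - (|deriv^[3] y t| - |deriv^[3] y (t - r)|))) :
    ∀ t, t ≥ t₀ + Real.pi * p / (2 * q * Real.sqrt (α₁ * β₁)) →
      ζhat t = w ^ 2 ∧ |ζhat t| ^ ((1 : ℝ) / 2) = w :=
  fixed_time_frequency_estimation_exact_derivatives_general A B w φ₀ r hB hw hr y γ₁ γ₂ hy hγ₁ hγ₂
    α₁ β₁ hα₁ hβ₁ p q hp hq t₀ ζhat e he hdiff hlaw
end
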